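/- arXiv:2004.03914 — 3 statements merged into one kernel-verified Lean document; each statement's English description precedes it below -/
import Mathlib

section
/- Let Γ be a finite simple connected triangle-free graph with more than one vertex. Then either Γ is a complete bipartite graph, or Γ contains the 3-path graph (path on 4 vertices) as a full (induced) subgraph. -/
/-!
Fix an edge `ab`. In a triangle-free graph without induced `P₄`, the set `N(a) ∪ N(b)` is closed
under taking neighbours: a neighbour `y` of `u ∈ N(a)` outside it would give the induced path
`b - a - u - y`. By connectivity this set is everything, and `N(a)`, `N(b)` are disjoint
independent sets. Any `u ∈ N(b)`, `w ∈ N(a)` are adjacent, since otherwise `u - b - a - w` is an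
induced `P₄`, so `G` is complete bipartite with parts `N(b)` and `N(a)`.
-/

namespace SimpleGraph

variable {V : Type*} {G : SimpleGraph V}

lemma CliqueFree.not_adj_of_adj_of_adj (htf : G.CliqueFree 3) {v u w : V}
    (hu : G.Adj v u) (hw : G.Adj v w) : ¬G.Adj u w := fun huw =>
  isIndepSet_neighborSet_of_triangleFree G htf v hu hw huw.ne huw

lemma nonempty_pathGraph_four_embedding {a b c d : V}
    (hab : G.Adj a b) (hbc : G.Adj b c) (hcd : G.Adj c d)
    (hac : ¬G.Adj a c) (had : ¬G.Adj a d) (hbd : ¬G.Adj b d)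
    (hac' : a ≠ c) (had' : a ≠ d) (hbd' : b ≠ d) :
    Nonempty (pathGraph 4 ↪g G) := by
  refine ⟨⟨⟨![a, b, c, d], fun i j hij => ?_⟩, fun {i j} => ?_⟩⟩
  · fin_cases i <;> fin_cases j <;>
      simp_all [hab.ne, hbc.ne, hcd.ne, hab.ne', hbc.ne', hcd.ne', hac'.symm, had'.symm, hbd'.symm]
  · change G.Adj (![a, b, c, d] i) (![a, b, c, d] j) ↔ _
    fin_cases i <;> fin_cases j <;>
      simp [pathGraph_adj, hab, hbc, hcd, hab.symm, hbc.symm, hcd.symm, hac, had, hbd,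
        G.adj_comm c a, G.adj_comm d a, G.adj_comm d b]

section InducedPathFree

variable (htf : G.CliqueFree 3) (hP4 : IsEmpty (pathGraph 4 ↪g G)) {a b : V} (hab : G.Adj a b)
include htf hP4 hab

lemma adj_or_adj_of_adj_of_adj {u y : V} (hau : G.Adj a u) (huy : G.Adj u y) :
    G.Adj a y ∨ G.Adj b y := by
  by_contra! ⟨hay, hby⟩
  have hbu : ¬G.Adj b u := htf.not_adj_of_adj_of_adj hab hau
  refine hP4.false (nonempty_pathGraph_four_embedding hab.symm hau huy hbu hby hay
    ?_ ?_ ?_).some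
  · rintro rfl; exact hby huy
  · rintro rfl; exact hay hab
  · rintro rfl; exact hby hab.symm

lemma adj_or_adj_of_preconnected (hconn : G.Preconnected) (x : V) : G.Adj a x ∨ G.Adj b x := by
  by_contra hx
  obtain ⟨d, -, hd, hd'⟩ := (hconn b x).some.exists_boundary_dart {y | G.Adj a y ∨ G.Adj b y}
    (Or.inl hab) hx
  refine hd' (hd.elim (fun had => ?_) (fun hbd => ?_))
  · exact adj_or_adj_of_adj_of_adj htf hP4 hab had d.adj
  · exact (adj_or_adj_of_adj_of_adj htf hP4 hab.symm hbd d.adj).symm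

lemma adj_of_adj_of_adj {u w : V} (hu : G.Adj b u) (hw : G.Adj a w) : G.Adj u w := by
  by_contra huw
  have hua : ¬G.Adj u a := fun h => htf.not_adj_of_adj_of_adj hab.symm hu h.symm
  have hbw : ¬G.Adj b w := htf.not_adj_of_adj_of_adj hab hw
  refine hP4.false (nonempty_pathGraph_four_embedding hu.symm hab.symm hw hua huw hbw
    ?_ ?_ ?_).some
  · rintro rfl; exact huw hw
  · rintro rfl; exact hbw hu
  · rintro rfl; exact huw hu.symm

lemma adj_iff_of_preconnected (hconn : G.Preconnected) (u w : V) :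
    G.Adj u w ↔ (G.Adj b u ∧ G.Adj a w) ∨ (G.Adj a u ∧ G.Adj b w) := by
  refine ⟨fun huw => ?_, ?_⟩
  · rcases adj_or_adj_of_preconnected htf hP4 hab hconn u with hu | hu <;>
      rcases adj_or_adj_of_preconnected htf hP4 hab hconn w with hw | hw
    · exact (htf.not_adj_of_adj_of_adj hu hw huw).elim
    · exact .inr ⟨hu, hw⟩
    · exact .inl ⟨hu, hw⟩
    · exact (htf.not_adj_of_adj_of_adj hu hw huw).elim
  · rintro (⟨hu, hw⟩ | ⟨hu, hw⟩)
    · exact adj_of_adj_of_adj htf hP4 hab hu hw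
    · exact (adj_of_adj_of_adj htf hP4 hab hw hu).symm

end InducedPathFree

end SimpleGraph

open SimpleGraph

/-- A finite simple connected triangle-free graph with more than one
vertex is either complete bipartite or contains an induced path on 4 vertices. -/
theorem stmt_0 {V : Type} [Fintype V] (G : SimpleGraph V)
    (hconn : G.Connected) (htf : G.CliqueFree 3) (hcard : 1 < Fintype.card V) :
    (∃ W B : Set V, W.Nonempty ∧ B.Nonempty ∧
        (∀ v, (v ∈ W ∨ v ∈ B) ∧ ¬(v ∈ W ∧ v ∈ B)) ∧
        (∀ u w, G.Adj u w ↔ ((u ∈ W ∧ w ∈ B) ∨ (u ∈ B ∧ w ∈ W)))) ∨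
      Nonempty (SimpleGraph.pathGraph 4 ↪g G) := by
  refine or_iff_not_imp_right.mpr fun hP4 => ?_
  rw [not_nonempty_iff] at hP4
  have := Fintype.one_lt_card_iff_nontrivial.mp hcard
  obtain ⟨a⟩ := (inferInstance : Nonempty V)
  obtain ⟨b, hab⟩ := hconn.preconnected.exists_adj_of_nontrivial a
  refine ⟨{x | G.Adj b x}, {x | G.Adj a x}, ⟨a, hab.symm⟩, ⟨b, hab⟩, fun v => ⟨?_, ?_⟩,
    adj_iff_of_preconnected htf hP4 hab hconn.preconnected⟩
  · exact (adj_or_adj_of_preconnected htf hP4 hab hconn.preconnected v).symm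
  · exact fun ⟨hbv, hav⟩ => htf.not_adj_of_adj_of_adj hab hav hbv
end

section
/- For odd m ≥ 3, the quotient of the dihedral Artin–Tits group A_m = ⟨s, t | stst⋯ = tsts⋯ (both sides of length m)⟩ by its center is isomorphic to the free product ℤ/mℤ * ℤ/2ℤ. -/
/-- The alternating word s t s t ⋯ of given length in the free group. -/
def altWord {V : Type} : V → V → ℕ → FreeGroup V
  | _, _, 0 => 1
  | s, t, n + 1 => FreeGroup.of s * altWord t s n

/-- The Artin relations for an edge-labeling `m` (where `m s t = 0` or `1`
means no edge, and a label `m s t ≥ 2` imposes the braid relation). -/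
def artinRels {V : Type} (m : V → V → ℕ) : Set (FreeGroup V) :=
  { r | ∃ s t : V, 2 ≤ m s t ∧ r = altWord s t (m s t) * (altWord t s (m s t))⁻¹ }

/-- The Artin–Tits group of an edge-labeled graph, encoded by its labeling. -/
abbrev ArtinGroup {V : Type} (m : V → V → ℕ) : Type := PresentedGroup (artinRels m)

/-- The labeling of a single edge (on vertex set `Bool`) with label `m`. -/
def dihedralLabel (m : ℕ) : Bool → Bool → ℕ :=
  fun a b => if a = b then 0 else m

/-!
Write `x = st` and `y = Δ = sts⋯` (`m = 2k + 1` letters), so that `Δ = (st)ᵏs`. Then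
`s = x⁻ᵏy` and `t = y⁻¹xᵏ⁺¹`, and under this change of generators the braid relation becomes
`xᵐ = y²`. Hence `Δ² = (st)ᵐ` commutes with `x` and `y`, so it is central, and
`A_m / ⟨Δ²⟩ = ⟨x, y ∣ xᵐ = y² = 1⟩ ≅ ℤ/m * ℤ/2`. A free product of a nontrivial group and a
group with at least three elements has trivial center (compare reduced words), so `⟨Δ²⟩` is the
whole center of `A_m`.
-/

open Cardinal

section GroupIdentities
variable {G : Type*} [Group G]

theorem mul_pow_two_mul_add_one_of_braid {a b : G} {k : ℕ}
    (h : (a * b) ^ k * a = (b * a) ^ k * b) :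
    (a * b) ^ (2 * k + 1) = ((a * b) ^ k * a) ^ 2 := by
  calc (a * b) ^ (2 * k + 1) = (a * b) ^ k * ((a * b) ^ k * a) * b := by
        rw [two_mul, pow_succ, pow_add]; group
    _ = (a * b) ^ k * (a * (b * a) ^ k) * b := by rw [mul_pow_mul]
    _ = ((a * b) ^ k * a) ^ 2 := by rw [sq]; nth_rewrite 2 [h]; group

theorem braid_of_pow_eq_sq {x y : G} {k : ℕ} (h : x ^ (2 * k + 1) = y ^ 2) :
    ((x ^ k)⁻¹ * y * (y⁻¹ * x ^ (k + 1))) ^ k * ((x ^ k)⁻¹ * y) = y ∧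
      (y⁻¹ * x ^ (k + 1) * ((x ^ k)⁻¹ * y)) ^ k * (y⁻¹ * x ^ (k + 1)) = y := by
  have hx : (x ^ k)⁻¹ * y * (y⁻¹ * x ^ (k + 1)) = x := by rw [pow_succ]; group
  have hconj : y⁻¹ * x ^ (k + 1) * ((x ^ k)⁻¹ * y) = y⁻¹ * x * y := by rw [pow_succ]; group
  refine ⟨by rw [hx]; group, ?_⟩
  have hconj_pow : (y⁻¹ * x * y) ^ k = y⁻¹ * x ^ k * y := by
    simpa using conj_pow (a := y⁻¹) (b := x) (i := k)
  rw [hconj, hconj_pow]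
  calc y⁻¹ * x ^ k * y * (y⁻¹ * x ^ (k + 1)) = y⁻¹ * x ^ (2 * k + 1) := by
        rw [two_mul, add_assoc, pow_add]; group
    _ = y := by rw [h]; group

end GroupIdentities

theorem altWord_two_mul {V : Type} (s t : V) :
    ∀ n, altWord s t (2 * n) = (FreeGroup.of s * FreeGroup.of t) ^ n
  | 0 => rfl
  | n + 1 => by
    rw [show 2 * (n + 1) = 2 * n + 1 + 1 by ring, altWord, altWord, altWord_two_mul s t n,
      pow_succ', mul_assoc]

theorem altWord_two_mul_add_one {V : Type} (s t : V) (n : ℕ) :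
    altWord s t (2 * n + 1) = (FreeGroup.of s * FreeGroup.of t) ^ n * FreeGroup.of s := by
  rw [altWord, altWord_two_mul, mul_pow_mul]

namespace ArtinGroup
variable {V : Type} {m : V → V → ℕ} {H : Type*} [Group H]

theorem mk_altWord_eq {s t : V} (h : 2 ≤ m s t) :
    PresentedGroup.mk (artinRels m) (altWord s t (m s t)) =
      PresentedGroup.mk (artinRels m) (altWord t s (m s t)) :=
  PresentedGroup.mk_eq_mk_of_mul_inv_mem ⟨s, t, h, rfl⟩

variable (f : V → H)
  (hf : ∀ s t, 2 ≤ m s t →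
    FreeGroup.lift f (altWord s t (m s t)) = FreeGroup.lift f (altWord t s (m s t)))

def lift : ArtinGroup m →* H :=
  PresentedGroup.toGroup (f := f) <| by
    rintro _ ⟨s, t, hst, rfl⟩
    rw [map_mul, map_inv, hf s t hst, mul_inv_cancel]

theorem lift_of (s : V) : lift f hf (PresentedGroup.of s) = f s :=
  PresentedGroup.toGroup.of _

end ArtinGroup

section ZModHom
variable {H : Type*} [Group H]

def zmodPowHom (n : ℕ) (h : H) (hh : h ^ n = 1) : Multiplicative (ZMod n) →* H :=
  AddMonoidHom.toMultiplicativeLeft <|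
    ZMod.lift n ⟨zmultiplesHom _ (Additive.ofMul h), by simp [← ofMul_pow, hh]⟩

theorem zmodPowHom_ofAdd_one (n : ℕ) (h : H) (hh : h ^ n = 1) :
    zmodPowHom n h hh (Multiplicative.ofAdd 1) = h := by
  rw [zmodPowHom, AddMonoidHom.toMultiplicativeLeft_apply_apply, toAdd_ofAdd, ← Int.cast_one,
    ZMod.lift_coe]
  simp

theorem MonoidHom.ext_mzmod {n : ℕ} {φ ψ : Multiplicative (ZMod n) →* H}
    (h : φ (Multiplicative.ofAdd 1) = ψ (Multiplicative.ofAdd 1)) : φ = ψ := by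
  refine MonoidHom.ext fun z => ?_
  obtain ⟨i, hi⟩ := ZMod.intCast_surjective z.toAdd
  have hz : z = Multiplicative.ofAdd (1 : ZMod n) ^ i := by rw [← ofAdd_zsmul, zsmul_one, hi]; rfl
  rw [hz, map_zpow, map_zpow, h]

theorem ZMod.map_ofAdd_one_pow {n : ℕ} {M : Type*} [Monoid M]
    (f : Multiplicative (ZMod n) →* M) : f (.ofAdd 1) ^ n = 1 := by
  rw [← map_pow, ← ofAdd_nsmul, nsmul_one, ZMod.natCast_self, ofAdd_zero, map_one]

end ZModHom

theorem Subgroup.center_eq_bot_of_mulEquiv {G H : Type*} [Group G] [Group H] (e : G ≃* H)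
    (h : Subgroup.center H = ⊥) : Subgroup.center G = ⊥ := by
  refine (Subgroup.eq_bot_iff_forall _).mpr fun c hc => ?_
  rw [← e.map_eq_one_iff]
  exact Subgroup.mem_bot.mp (h ▸ MulEquivClass.apply_mem_center e hc)

theorem Subgroup.center_eq_of_center_quotient_eq_bot {G : Type*} [Group G] {N : Subgroup G}
    [N.Normal] (hN : N ≤ Subgroup.center G) (h : Subgroup.center (G ⧸ N) = ⊥) :
    Subgroup.center G = N := by
  refine le_antisymm (fun g hg => ?_) hN
  rw [← QuotientGroup.eq_one_iff, ← Subgroup.mem_bot, ← h, Subgroup.mem_center_iff]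
  intro q
  induction q using QuotientGroup.induction_on with
  | H q => rw [← QuotientGroup.mk_mul, ← QuotientGroup.mk_mul, Subgroup.mem_center_iff.mp hg]

namespace Monoid.CoprodI.NeWord
variable {ι : Type*} {M : ι → Type*} [∀ i, Group (M i)]

theorem idx_eq_of_prod_eq {i j k l : ι} (w₁ : NeWord M i j) (w₂ : NeWord M k l)
    (h : w₁.prod = w₂.prod) : i = k ∧ j = l := by
  classical
  have hlist : w₁.toList = w₂.toList :=
    congrArg Word.toList (Word.equiv.symm.injective h)
  have hhead := w₁.toList_head?
  have hlast := w₁.toList_getLast?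
  rw [hlist, toList_head?, Option.some.injEq] at hhead
  rw [hlist, toList_getLast?, Option.some.injEq] at hlast
  exact ⟨(Sigma.mk.inj_iff.mp hhead).1.symm, (Sigma.mk.inj_iff.mp hlast).1.symm⟩

theorem prod_notMem_center_of_head_eq_last {i k : ι} (w : NeWord M i i) (hki : k ≠ i)
    {x : M k} (hx : x ≠ 1) : w.prod ∉ Subgroup.center (CoprodI M) := by
  intro hw
  have h : (append (singleton x hx) hki w).prod = (append w hki.symm (singleton x hx)).prod := by
    rw [append_prod, append_prod, prod_singleton, Subgroup.mem_center_iff.mp hw]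
  exact hki (idx_eq_of_prod_eq _ _ h).1

theorem prod_notMem_center_of_three_le {i j : ι} (w : NeWord M i j) (hij : i ≠ j)
    (hcard : 3 ≤ #(M i)) : w.prod ∉ Subgroup.center (CoprodI M) := by
  intro hw
  obtain ⟨x, hx1, hxw⟩ := exists_ne_ne_of_three_le hcard 1 w.head⁻¹
  have hxw : x * w.head ≠ 1 := fun h => hxw (eq_inv_of_mul_eq_one_left h)
  -- conjugating by `x` turns the reduced word into one that ends in `M i`
  have h : (append (mulHead w x hxw) hij.symm (singleton x⁻¹ (inv_ne_one.mpr hx1))).prod =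
      w.prod := by
    rw [append_prod, mulHead_prod, prod_singleton, Subgroup.mem_center_iff.mp hw, mul_assoc,
      ← map_mul, mul_inv_cancel, map_one, mul_one]
  exact hij (idx_eq_of_prod_eq _ _ h).2

end Monoid.CoprodI.NeWord

theorem Monoid.CoprodI.center_eq_bot_of_bool {M : Bool → Type*} [∀ b, Group (M b)]
    [Nontrivial (M true)] (hcard : 3 ≤ #(M false)) :
    Subgroup.center (CoprodI M) = ⊥ := by
  classical
  have : Nontrivial (M false) :=
    Cardinal.one_lt_iff_nontrivial.mp (lt_of_lt_of_le (by norm_num) hcard)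
  refine (Subgroup.eq_bot_iff_forall _).mpr fun c hc => ?_
  by_contra hc1
  have hw : Word.equiv c ≠ Word.empty := fun h => hc1 <| by
    rw [← Word.equiv.symm_apply_apply c, h]; exact Word.prod_empty
  obtain ⟨i, j, w, hw⟩ := NeWord.of_word _ hw
  have hwc : w.prod = c := by rw [NeWord.prod, hw]; exact Word.equiv.symm_apply_apply c
  subst hwc
  rcases i <;> rcases j
  · obtain ⟨x, hx⟩ := exists_ne (1 : M true)
    exact w.prod_notMem_center_of_head_eq_last (by decide) hx hc
  · exact w.prod_notMem_center_of_three_le (by decide) hcard hc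
  · exact w.inv.prod_notMem_center_of_three_le (by decide) hcard
      (by rw [NeWord.inv_prod]; exact Subgroup.inv_mem _ hc)
  · obtain ⟨x, hx⟩ := exists_ne (1 : M false)
    exact w.prod_notMem_center_of_head_eq_last (by decide) hx hc

namespace Monoid.Coprod
universe u
variable (G H : Type u) [Group G] [Group H]

-- Reduced words are only available for `CoprodI`, so `G ∗ H` is transported there.
def boolFamily : Bool → Type u := fun b => cond b H G

instance : ∀ b, Group (boolFamily G H b)
  | false => inferInstanceAs (Group G)
  | true => inferInstanceAs (Group H)

def boolFamilyHom : ∀ b, boolFamily G H b →* G ∗ H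
  | false => Coprod.inl
  | true => Coprod.inr

noncomputable def mulEquivCoprodI : G ∗ H ≃* CoprodI (boolFamily G H) := by
  refine MonoidHom.toMulEquiv
    (Coprod.lift (CoprodI.of (M := boolFamily G H) (i := false))
      (CoprodI.of (M := boolFamily G H) (i := true)))
    (CoprodI.lift (boolFamilyHom G H)) ?_ ?_
  · refine Coprod.hom_ext ?_ ?_ <;> ext x
    · exact CoprodI.lift_of (M := boolFamily G H) (boolFamilyHom G H) (i := false) x
    · exact CoprodI.lift_of (M := boolFamily G H) (boolFamilyHom G H) (i := true) x
  · refine CoprodI.ext_hom _ _ fun b => ?_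
    cases b <;> ext x <;> simp only [MonoidHom.comp_apply, CoprodI.lift_of, MonoidHom.id_apply]
    · exact Coprod.lift_apply_inl _ _ x
    · exact Coprod.lift_apply_inr _ _ x

variable {G H}

theorem center_eq_bot [Nontrivial H] (hcard : 3 ≤ #G) : Subgroup.center (G ∗ H) = ⊥ := by
  have : Nontrivial (boolFamily G H true) := ‹Nontrivial H›
  exact Subgroup.center_eq_bot_of_mulEquiv (mulEquivCoprodI G H)
    (CoprodI.center_eq_bot_of_bool hcard)

end Monoid.Coprod

namespace DihedralArtin

def s (m : ℕ) : ArtinGroup (dihedralLabel m) := PresentedGroup.of false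

def t (m : ℕ) : ArtinGroup (dihedralLabel m) := PresentedGroup.of true

def garside (m : ℕ) : ArtinGroup (dihedralLabel m) :=
  PresentedGroup.mk _ (altWord false true m)

theorem garside_eq_of_braid {m : ℕ} (hm : 2 ≤ m) :
    garside m = PresentedGroup.mk _ (altWord true false m) :=
  ArtinGroup.mk_altWord_eq (m := dihedralLabel m) (s := false) (t := true) hm

variable {k : ℕ}

theorem garside_eq : garside (2 * k + 1) = (s _ * t _) ^ k * s _ := by
  rw [garside, altWord_two_mul_add_one, map_mul, map_pow, map_mul]; rfl

theorem garside_eq' (hk : 1 ≤ k) : garside (2 * k + 1) = (t _ * s _) ^ k * t _ := by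
  rw [garside_eq_of_braid (by omega), altWord_two_mul_add_one, map_mul, map_pow, map_mul]; rfl

theorem mul_pow_eq_garside_sq (hk : 1 ≤ k) :
    (s _ * t _) ^ (2 * k + 1) = garside (2 * k + 1) ^ 2 := by
  rw [garside_eq]
  exact mul_pow_two_mul_add_one_of_braid (garside_eq.symm.trans (garside_eq' hk))

theorem s_eq : s (2 * k + 1) = ((s _ * t _) ^ k)⁻¹ * garside _ := by
  rw [garside_eq]; group

theorem t_eq : t (2 * k + 1) = (garside _)⁻¹ * (s _ * t _) ^ (k + 1) := by
  rw [garside_eq, pow_succ]; group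

theorem hom_ext {H : Type*} [Group H] {φ ψ : ArtinGroup (dihedralLabel (2 * k + 1)) →* H}
    (hx : φ (s _ * t _) = ψ (s _ * t _)) (hy : φ (garside _) = ψ (garside _)) : φ = ψ := by
  refine PresentedGroup.ext fun b => ?_
  cases b
  · change φ (s _) = ψ (s _)
    rw [s_eq, map_mul, map_mul, map_inv, map_inv, map_pow, map_pow, hx, hy]
  · change φ (t _) = ψ (t _)
    rw [t_eq, map_mul, map_mul, map_inv, map_inv, map_pow, map_pow, hx, hy]

theorem mul_pow_mem_center (hk : 1 ≤ k) :
    (s _ * t _) ^ (2 * k + 1) ∈ Subgroup.center (ArtinGroup (dihedralLabel (2 * k + 1))) := by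
  set z := (s (2 * k + 1) * t _) ^ (2 * k + 1)
  have hx : s _ * t _ ∈ Subgroup.centralizer {z} :=
    Subgroup.mem_centralizer_singleton_iff.mpr (Commute.self_pow _ _)
  have hy : garside _ ∈ Subgroup.centralizer {z} := by
    rw [Subgroup.mem_centralizer_singleton_iff,
      show z = garside _ ^ 2 from mul_pow_eq_garside_sq hk]
    exact Commute.self_pow _ _
  have hgen : ∀ b, PresentedGroup.of b ∈ Subgroup.centralizer {z}
    | false => by
      rw [← s, s_eq]
      exact mul_mem (inv_mem (pow_mem hx k)) hy
    | true => by
      rw [← t, t_eq]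
      exact mul_mem (inv_mem hy) (pow_mem hx (k + 1))
  exact Subgroup.mem_center_iff.mpr fun g =>
    (Subgroup.mem_centralizer_singleton_iff.mp (PresentedGroup.generated_by _ _ hgen g))

section Lift
variable {H : Type*} [Group H]

def lift (x y : H) (h : x ^ (2 * k + 1) = y ^ 2) :
    ArtinGroup (dihedralLabel (2 * k + 1)) →* H :=
  ArtinGroup.lift (fun b => cond b (y⁻¹ * x ^ (k + 1)) ((x ^ k)⁻¹ * y)) <| by
    intro a b hab
    have hne : a ≠ b := by rintro rfl; simp [dihedralLabel] at hab
    obtain ⟨hst, hts⟩ := braid_of_pow_eq_sq h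
    simp only [dihedralLabel, if_neg hne, altWord_two_mul_add_one, map_mul, map_pow,
      FreeGroup.lift_apply_of]
    rcases a <;> rcases b
    all_goals first | exact absurd rfl hne | simp only [cond_true, cond_false, hst, hts]

variable {x y : H}

theorem lift_s (h : x ^ (2 * k + 1) = y ^ 2) : lift x y h (s _) = (x ^ k)⁻¹ * y :=
  ArtinGroup.lift_of _ _ false

theorem lift_t (h : x ^ (2 * k + 1) = y ^ 2) : lift x y h (t _) = y⁻¹ * x ^ (k + 1) :=
  ArtinGroup.lift_of _ _ true

theorem lift_s_mul_t (h : x ^ (2 * k + 1) = y ^ 2) : lift x y h (s _ * t _) = x := by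
  rw [map_mul, lift_s, lift_t, pow_succ]; group

theorem lift_garside (h : x ^ (2 * k + 1) = y ^ 2) : lift x y h (garside _) = y := by
  rw [garside_eq, map_mul, map_pow, lift_s_mul_t, lift_s]; group

end Lift

section Quotient
open Monoid.Coprod

abbrev garsideSqClosure (k : ℕ) : Subgroup (ArtinGroup (dihedralLabel (2 * k + 1))) :=
  Subgroup.normalClosure {garside _ ^ 2}

noncomputable def toCoprod (k : ℕ) : ArtinGroup (dihedralLabel (2 * k + 1)) →*
    Multiplicative (ZMod (2 * k + 1)) ∗ Multiplicative (ZMod 2) :=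
  lift (inl (.ofAdd 1)) (inr (.ofAdd 1))
    ((ZMod.map_ofAdd_one_pow _).trans (ZMod.map_ofAdd_one_pow _).symm)

theorem toCoprod_s_mul_t : toCoprod k (s _ * t _) = inl (.ofAdd 1) := lift_s_mul_t _

theorem toCoprod_garside : toCoprod k (garside _) = inr (.ofAdd 1) := lift_garside _

noncomputable def quotientToCoprod (k : ℕ) :
    ArtinGroup (dihedralLabel (2 * k + 1)) ⧸ garsideSqClosure k →*
      Multiplicative (ZMod (2 * k + 1)) ∗ Multiplicative (ZMod 2) :=
  QuotientGroup.lift _ (toCoprod k) <| Subgroup.normalClosure_le_normal <| by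
    rw [Set.singleton_subset_iff, SetLike.mem_coe, MonoidHom.mem_ker, map_pow, toCoprod_garside]
    exact ZMod.map_ofAdd_one_pow _

theorem mk_garside_sq : QuotientGroup.mk' (garsideSqClosure k) (garside _ ^ 2) = 1 := by
  rw [QuotientGroup.mk'_apply, QuotientGroup.eq_one_iff]
  exact Subgroup.subset_normalClosure rfl

noncomputable def coprodToQuotient (hk : 1 ≤ k) :
    Multiplicative (ZMod (2 * k + 1)) ∗ Multiplicative (ZMod 2) →*
      ArtinGroup (dihedralLabel (2 * k + 1)) ⧸ garsideSqClosure k :=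
  Monoid.Coprod.lift
    (zmodPowHom _ (QuotientGroup.mk' _ (s _ * t _))
      (by rw [← map_pow, mul_pow_eq_garside_sq hk, mk_garside_sq]))
    (zmodPowHom 2 (QuotientGroup.mk' _ (garside _)) (by rw [← map_pow, mk_garside_sq]))

theorem quotientToCoprod_mk (g : ArtinGroup (dihedralLabel (2 * k + 1))) :
    quotientToCoprod k (QuotientGroup.mk' _ g) = toCoprod k g :=
  QuotientGroup.lift_mk' _ _ g

theorem coprodToQuotient_inl (hk : 1 ≤ k) :
    coprodToQuotient hk (inl (.ofAdd 1)) = QuotientGroup.mk' _ (s _ * t _) := by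
  rw [coprodToQuotient, Monoid.Coprod.lift_apply_inl, zmodPowHom_ofAdd_one]

theorem coprodToQuotient_inr (hk : 1 ≤ k) :
    coprodToQuotient hk (inr (.ofAdd 1)) = QuotientGroup.mk' _ (garside _) := by
  rw [coprodToQuotient, Monoid.Coprod.lift_apply_inr, zmodPowHom_ofAdd_one]

noncomputable def quotientMulEquivCoprod (hk : 1 ≤ k) :
    ArtinGroup (dihedralLabel (2 * k + 1)) ⧸ garsideSqClosure k ≃*
      Multiplicative (ZMod (2 * k + 1)) ∗ Multiplicative (ZMod 2) :=
  MonoidHom.toMulEquiv (quotientToCoprod k) (coprodToQuotient hk)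
    (QuotientGroup.monoidHom_ext _ <| hom_ext
      (by simp only [MonoidHom.comp_apply, quotientToCoprod_mk, toCoprod_s_mul_t,
        coprodToQuotient_inl, MonoidHom.id_apply])
      (by simp only [MonoidHom.comp_apply, quotientToCoprod_mk, toCoprod_garside,
        coprodToQuotient_inr, MonoidHom.id_apply]))
    (Monoid.Coprod.hom_ext
      (MonoidHom.ext_mzmod <| by simp only [MonoidHom.comp_apply, coprodToQuotient_inl,
        quotientToCoprod_mk, toCoprod_s_mul_t, MonoidHom.id_apply])
      (MonoidHom.ext_mzmod <| by simp only [MonoidHom.comp_apply, coprodToQuotient_inr,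
        quotientToCoprod_mk, toCoprod_garside, MonoidHom.id_apply]))

theorem center_eq_garsideSqClosure (hk : 1 ≤ k) :
    Subgroup.center (ArtinGroup (dihedralLabel (2 * k + 1))) = garsideSqClosure k := by
  refine Subgroup.center_eq_of_center_quotient_eq_bot ?_ ?_
  · refine Subgroup.normalClosure_le_normal (Set.singleton_subset_iff.mpr ?_)
    rw [SetLike.mem_coe, ← mul_pow_eq_garside_sq hk]
    exact mul_pow_mem_center hk
  · refine Subgroup.center_eq_bot_of_mulEquiv (quotientMulEquivCoprod hk) (center_eq_bot ?_)
    rw [Cardinal.mk_fintype, Fintype.card_multiplicative, ZMod.card]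
    exact_mod_cast (by omega : 3 ≤ 2 * k + 1)

end Quotient

end DihedralArtin

/-- For odd m ≥ 3, the central quotient of the dihedral Artin–Tits
group A_m is isomorphic to ℤ/mℤ * ℤ/2ℤ. -/
theorem stmt_8 (m : ℕ) (hm : 3 ≤ m) (hodd : Odd m) :
    Nonempty ((ArtinGroup (dihedralLabel m) ⧸
        Subgroup.center (ArtinGroup (dihedralLabel m))) ≃*
      Monoid.Coprod (Multiplicative (ZMod m)) (Multiplicative (ZMod 2))) := by
  obtain ⟨k, rfl⟩ := hodd
  have hk : 1 ≤ k := by omega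
  exact ⟨(QuotientGroup.quotientMulEquivOfEq (DihedralArtin.center_eq_garsideSqClosure hk)).trans
    (DihedralArtin.quotientMulEquivCoprod hk)⟩
end

section
/- Let e be an edge with endpoints s, t labeled by an integer m ≥ 3. The group presented with generators s, t, x, α₃, …, α_m and relations x = st, x = tα₃, x = α₃α₄, …, x = α_{i}α_{i+1}, …, x = α_m s is isomorphic to the dihedral Artin–Tits group ⟨s, t | stst⋯ = tsts⋯ (both sides of length m)⟩. -/
/-- Brady–McCammond relations for an edge labeled `m ≥ 3`: generators indexed by
`Fin (m + 1)`, with `0 ↦ s`, `1 ↦ t`, `2 ↦ x` and `i ↦ αᵢ` for `3 ≤ i ≤ m`.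
Relations: `x = s t`, `x = t α₃`, `x = αᵢ αᵢ₊₁` (`3 ≤ i ≤ m - 1`), `x = α_m s`. -/
def bmRels (m : ℕ) (hm : 3 ≤ m) : Set (FreeGroup (Fin (m + 1))) :=
  insert (FreeGroup.of 2 * (FreeGroup.of 0 * FreeGroup.of 1)⁻¹)
    (insert (FreeGroup.of 2 * (FreeGroup.of 1 * FreeGroup.of ⟨3, by omega⟩)⁻¹)
      (insert (FreeGroup.of 2 * (FreeGroup.of ⟨m, by omega⟩ * FreeGroup.of 0)⁻¹)
        { r | ∃ i : ℕ, ∃ h : 3 ≤ i ∧ i + 1 ≤ m,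
            r = FreeGroup.of 2 *
              (FreeGroup.of ⟨i, by omega⟩ * FreeGroup.of ⟨i + 1, by omega⟩)⁻¹ }))

variable {G H : Type*} [Group G] [Group H]

def altProd (s t : G) : ℕ → G
  | 0 => 1
  | n + 1 => s * altProd t s n

def altProdRev (s t : G) : ℕ → G
  | 0 => 1
  | n + 1 => altProdRev t s n * t

theorem lift_altWord {V : Type} (f : V → G) (a b : V) (n : ℕ) :
    FreeGroup.lift f (altWord a b n) = altProd (f a) (f b) n := by
  induction n generalizing a b with
  | zero => simp [altWord, altProd]
  | succ n ih => simp [altWord, altProd, ih]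

theorem altProd_succ_right (s t : G) (n : ℕ) :
    altProd s t (n + 1) = altProd s t n * if Even n then s else t := by
  induction n generalizing s t with
  | zero => simp [altProd]
  | succ n ih =>
    rw [altProd, ih, altProd, mul_assoc]
    rcases Nat.even_or_odd n with hn | hn <;> simp [hn, Nat.even_add_one]

theorem altProdRev_eq (s t : G) (n : ℕ) :
    altProdRev s t n = if Even n then altProd s t n else altProd t s n := by
  induction n generalizing s t with
  | zero => simp [altProdRev, altProd]
  | succ n ih =>
    rw [altProdRev, ih]
    by_cases hn : Even n <;> simp [hn, Nat.even_add_one, altProd_succ_right]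

theorem altProdRev_eq_iff_altProd_eq (s t : G) (n : ℕ) :
    altProdRev s t n = altProdRev t s n ↔ altProd s t n = altProd t s n := by
  rw [altProdRev_eq, altProdRev_eq]
  split_ifs
  · rfl
  · exact eq_comm

theorem altProdRev_add_two (s t : G) (n : ℕ) :
    altProdRev s t (n + 2) = altProdRev s t n * (s * t) := by
  simp only [altProdRev, mul_assoc]

/-- `bmAlpha s t n` is the paper's `αₙ₊₂`; its recursion is the relation `x = αₖ αₖ₊₁`. -/
def bmAlpha (s t : G) : ℕ → G
  | 0 => t
  | n + 1 => (bmAlpha s t n)⁻¹ * (s * t)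

theorem bmAlpha_succ (s t : G) (n : ℕ) : bmAlpha s t (n + 1) = (bmAlpha s t n)⁻¹ * (s * t) :=
  rfl

theorem map_bmAlpha (φ : G →* H) (s t : G) (n : ℕ) :
    φ (bmAlpha s t n) = bmAlpha (φ s) (φ t) n := by
  induction n with
  | zero => rfl
  | succ n ih => simp [bmAlpha, ih]

theorem bmAlpha_eq (s t : G) (n : ℕ) :
    bmAlpha s t n = (altProdRev s t n)⁻¹ * altProdRev s t (n + 1) := by
  induction n with
  | zero => simp [bmAlpha, altProdRev]
  | succ n ih => rw [bmAlpha, ih, altProdRev_add_two]; group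

theorem bmAlpha_mul_eq_iff (s t : G) (n : ℕ) :
    bmAlpha s t n * s = s * t ↔ altProd s t (n + 2) = altProd t s (n + 2) := by
  rw [← altProdRev_eq_iff_altProd_eq, bmAlpha_eq, mul_assoc, inv_mul_eq_iff_eq_mul,
    ← altProdRev_add_two, eq_comm]
  rfl

def bmGen (s t : G) : ℕ → G
  | 0 => s
  | 1 => t
  | 2 => s * t
  | n + 3 => bmAlpha s t (n + 1)

theorem map_bmGen (φ : G →* H) (s t : G) (n : ℕ) :
    φ (bmGen s t n) = bmGen (φ s) (φ t) n := by
  rcases n with _ | _ | _ | n <;> simp [bmGen, map_bmAlpha]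

def SatisfiesBMRelations (m : ℕ) (g : ℕ → G) : Prop :=
  g 2 = g 0 * g 1 ∧ g 2 = g 1 * g 3 ∧ g 2 = g m * g 0 ∧
    ∀ i, 3 ≤ i → i + 1 ≤ m → g 2 = g i * g (i + 1)

theorem lift_eq_one_of_mem_bmRels_iff (m : ℕ) (hm : 3 ≤ m) (g : ℕ → G) :
    (∀ r ∈ bmRels m hm, FreeGroup.lift (fun i : Fin (m + 1) => g i) r = 1) ↔
      SatisfiesBMRelations m g := by
  have h1 : ((1 : Fin (m + 1)) : ℕ) = 1 := by simp; omega
  have h2 : ((2 : Fin (m + 1)) : ℕ) = 2 := by simp; omega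
  simp only [bmRels, Set.forall_mem_insert, Set.mem_ofPred_eq, forall_exists_index,
    @forall_comm (FreeGroup (Fin (m + 1))), forall_eq, map_mul, map_inv, FreeGroup.lift_apply_of,
    mul_inv_eq_one, h1, h2, Fin.val_zero, and_imp]
  rfl

theorem satisfiesBMRelations_iff (m : ℕ) (hm : 3 ≤ m) (g : ℕ → G) :
    SatisfiesBMRelations m g ↔
      (∀ n ≤ m, g n = bmGen (g 0) (g 1) n) ∧ altProd (g 0) (g 1) m = altProd (g 1) (g 0) m := by
  obtain ⟨k, rfl⟩ : ∃ k, m = k + 3 := ⟨m - 3, by omega⟩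
  unfold SatisfiesBMRelations
  set s := g 0
  set t := g 1
  constructor
  · rintro ⟨hx, h3, hlast, hi⟩
    have hα : ∀ n, n ≤ k → g (n + 3) = bmAlpha s t (n + 1) := by
      intro n hn
      induction n with
      | zero => rw [bmAlpha_succ, bmAlpha, ← hx, h3, inv_mul_cancel_left]
      | succ n ih =>
        rw [bmAlpha_succ, ← ih (by omega), ← hx, hi (n + 3) (by omega) (by omega),
          inv_mul_cancel_left]
    refine ⟨fun n hn => ?_, ?_⟩
    · rcases n with _ | _ | _ | n
      exacts [rfl, rfl, hx, hα n (by omega)]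
    · rw [← bmAlpha_mul_eq_iff, ← hα k le_rfl, ← hx, hlast]
  · rintro ⟨hgen, hbraid⟩
    have hα : ∀ n, n ≤ k → g (n + 3) = bmAlpha s t (n + 1) := fun n hn => hgen (n + 3) (by omega)
    have hx : g 2 = s * t := hgen 2 (by omega)
    refine ⟨hx, ?_, ?_, fun i h3 hi => ?_⟩
    · rw [hα 0 (Nat.zero_le _), hx, bmAlpha_succ, bmAlpha, mul_inv_cancel_left]
    · rw [hα k le_rfl, hx, eq_comm, bmAlpha_mul_eq_iff]
      exact hbraid
    · obtain ⟨n, rfl⟩ : ∃ n, i = n + 3 := ⟨i - 3, by omega⟩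
      rw [hα n (by omega), hα (n + 1) (by omega), hx, bmAlpha_succ s t (n + 1),
        mul_inv_cancel_left]

theorem lift_eq_one_of_mem_artinRels_dihedralLabel_iff {m : ℕ} (hm : 2 ≤ m) (g : Bool → G) :
    (∀ r ∈ artinRels (dihedralLabel m), FreeGroup.lift g r = 1) ↔
      altProd (g false) (g true) m = altProd (g true) (g false) m := by
  have hrel : ∀ a b, FreeGroup.lift g (altWord a b m * (altWord b a m)⁻¹) = 1 ↔
      altProd (g a) (g b) m = altProd (g b) (g a) m := by
    intro a b
    rw [map_mul, map_inv, mul_inv_eq_one, lift_altWord, lift_altWord]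
  constructor
  · intro h
    exact (hrel false true).1 (h _ ⟨false, true, hm, rfl⟩)
  · rintro h r ⟨a, b, hab, rfl⟩
    cases a <;> cases b
    · simp [dihedralLabel] at hab
    · exact (hrel false true).2 h
    · exact (hrel true false).2 h.symm
    · simp [dihedralLabel] at hab

theorem PresentedGroup.lift_of_eq_one {α : Type*} {rels : Set (FreeGroup α)} {r : FreeGroup α}
    (hr : r ∈ rels) : FreeGroup.lift (PresentedGroup.of (rels := rels)) r = 1 := by
  have : FreeGroup.lift (PresentedGroup.of (rels := rels)) = PresentedGroup.mk rels :=
    FreeGroup.ext_hom _ _ fun _ => rfl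
  rw [this]
  exact PresentedGroup.one_of_mem hr

/-- The Brady–McCammond presentation with generators
s, t, x, α₃, …, α_m and relations x = st, x = tα₃, x = αᵢαᵢ₊₁, x = α_m s
presents the dihedral Artin–Tits group of label m. -/
theorem stmt_11 (m : ℕ) (hm : 3 ≤ m) :
    Nonempty (PresentedGroup (bmRels m hm) ≃* ArtinGroup (dihedralLabel m)) := by
  let s : ArtinGroup (dihedralLabel m) := .of false
  let t : ArtinGroup (dihedralLabel m) := .of true
  have hst : altProd s t m = altProd t s m :=
    (lift_eq_one_of_mem_artinRels_dihedralLabel_iff (by omega) PresentedGroup.of).1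
      fun _ => PresentedGroup.lift_of_eq_one
  let a : ℕ → PresentedGroup (bmRels m hm) := fun n => .of (Fin.ofNat (m + 1) n)
  obtain ⟨hgen, hbraid⟩ := (satisfiesBMRelations_iff m hm a).1 <|
    (lift_eq_one_of_mem_bmRels_iff m hm a).1 fun r hr => by
      simpa only [a, Fin.ofNat_val_eq_self] using PresentedGroup.lift_of_eq_one hr
  let φ := PresentedGroup.toGroup <| (lift_eq_one_of_mem_bmRels_iff m hm (bmGen s t)).2 <|
    (satisfiesBMRelations_iff m hm _).2 ⟨fun _ _ => rfl, hst⟩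
  let ψ := PresentedGroup.toGroup <|
    (lift_eq_one_of_mem_artinRels_dihedralLabel_iff (by omega) fun b => cond b (a 1) (a 0)).2 hbraid
  have hψs : ψ s = a 0 := PresentedGroup.toGroup.of _
  have hψt : ψ t = a 1 := PresentedGroup.toGroup.of _
  have hφ : ∀ n ≤ m, φ (a n) = bmGen s t n := fun n hn => by
    simp only [a, φ, PresentedGroup.toGroup.of, Fin.val_ofNat,
      Nat.mod_eq_of_lt (Nat.lt_succ_of_le hn)]
  refine ⟨MonoidHom.toMulEquiv φ ψ (PresentedGroup.ext fun i => ?_) (PresentedGroup.ext ?_)⟩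
  · rw [MonoidHom.comp_apply, PresentedGroup.toGroup.of, map_bmGen, hψs, hψt, ← hgen i i.is_le,
      MonoidHom.id_apply]
    exact congrArg PresentedGroup.of (Fin.ofNat_val_eq_self i)
  · rintro (_ | _)
    · exact (congrArg φ hψs).trans (hφ 0 (by omega))
    · exact (congrArg φ hψt).trans (hφ 1 (by omega))
end
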